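/- arXiv:2507.06431 — 4 statements merged into one kernel-verified Lean document; each statement's English description precedes it below -/
import Mathlib

section
/- Let a, b, c : ℝ → ℝ be given coefficient functions, let g0, h0 be nonzero real constants, and let α, β, γ : ℝ → ℝ be differentiable functions satisfying the Riccati system α'(t) + b(t) + 2c(t)α(t) + 4a(t)α(t)² = 0, β'(t) + (c(t) + 4a(t)α(t))β(t) = 0, γ'(t) + a(t)β(t)² = 0. Suppose d(t) = -2a(t)α(t), g(t) = g0·a(t)·β(t)², h(t) = h0·a(t)·β(t)². Let G : ℝ → ℝ be twice differentiable with G''(ξ) = g0·G(ξ) + 2h0·G(ξ)³ for all ξ. Define θ(x,t) = α(t)x² + β(t)x + γ(t) and ξ(x,t) = β(t)x + 2γ(t). Then ψ(x,t) = exp(i·θ(x,t))·G(ξ(x,t)) and φ(x,t) = exp(-i·θ(x,t))·G(ξ(x,t)) satisfy the coupled NLS system with variable coefficients: i ψ_t = -a(t) ψ_xx + b(t)x²ψ - i c(t) x ψ_x - i d(t) ψ + g(t) ψ + h(t)(|ψ|²+|φ|²)ψ and i φ_t = a(t) φ_xx - b(t)x²φ - i c(t) x φ_x - i d(t) φ -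 g(t) φ - h(t)(|ψ|²+|φ|²)φ. -/
/-- Partial derivative in the first (space) variable. -/
noncomputable def pderivX (f : ℝ → ℝ → ℂ) (x t : ℝ) : ℂ :=
  deriv (fun x' => f x' t) x

/-- Second partial derivative in the first (space) variable. -/
noncomputable def pderivXX (f : ℝ → ℝ → ℂ) (x t : ℝ) : ℂ :=
  iteratedDeriv 2 (fun x' => f x' t) x

/-- Partial derivative in the second (time) variable. -/
noncomputable def pderivT (f : ℝ → ℝ → ℂ) (x t : ℝ) : ℂ :=
  deriv (fun t' => f x t') t

/-- The coupled NLS system with variable coefficients. -/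
def CNLS (a b c d g h : ℝ → ℝ) (ψ φ : ℝ → ℝ → ℂ) : Prop :=
  ∀ x t : ℝ,
    (Complex.I * pderivT ψ x t =
      -(a t : ℂ) * pderivXX ψ x t + (b t : ℂ) * (x : ℂ) ^ 2 * ψ x t
        - Complex.I * (c t : ℂ) * (x : ℂ) * pderivX ψ x t
        - Complex.I * (d t : ℂ) * ψ x t + (g t : ℂ) * ψ x t
        + (h t : ℂ) * ((‖ψ x t‖ ^ 2 + ‖φ x t‖ ^ 2 : ℝ) : ℂ) * ψ x t)
    ∧ (Complex.I * pderivT φ x t =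
      (a t : ℂ) * pderivXX φ x t - (b t : ℂ) * (x : ℂ) ^ 2 * φ x t
        - Complex.I * (c t : ℂ) * (x : ℂ) * pderivX φ x t
        - Complex.I * (d t : ℂ) * φ x t - (g t : ℂ) * φ x t
        - (h t : ℂ) * ((‖ψ x t‖ ^ 2 + ‖φ x t‖ ^ 2 : ℝ) : ℂ) * φ x t)

/-!
With `e = I` for `ψ` and `e = -I` for `φ` (whose equation is first multiplied by `-1`), both
equations of the system read `e u_t = -a u_xx + b x² u - e c x u_x - e d u + g u + h N u` for
`u = exp (e θ) G(ξ)`, and `N = |ψ|² + |φ|² = 2 G(ξ)²` because `e` is imaginary. After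
substituting, the `G''` term cancels the `g` and `h` terms by the ODE for `G`, the `G'` terms
cancel by the Riccati equations for `β` and `γ`, and the `G` terms cancel by all three Riccati
equations up to `-b x² G (e² + 1) = 0`.
-/

open Complex

theorem pderivXX_eq_deriv_pderivX (f : ℝ → ℝ → ℂ) (x t : ℝ) :
    pderivXX f x t = deriv (fun x' => pderivX f x' t) x := by
  simp only [pderivXX, pderivX, iteratedDeriv_succ, iteratedDeriv_zero]

theorem HasDerivAt.cexp_mul_ofReal_mul {e : ℂ} {p : ℝ → ℝ} {p' : ℝ} {F : ℝ → ℂ} {F' : ℂ}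
    {x : ℝ} (hp : HasDerivAt p p' x) (hF : HasDerivAt F F' x) :
    HasDerivAt (fun y => Complex.exp (e * (p y : ℂ)) * F y)
      (Complex.exp (e * (p x : ℂ)) * (e * (p' : ℂ) * F x + F')) x :=
  (((hp.ofReal_comp.const_mul e).cexp).mul hF).congr_deriv (by ring)

theorem hasDerivAt_quadratic (A B C x : ℝ) :
    HasDerivAt (fun y => A * y ^ 2 + B * y + C) (2 * A * x + B) x :=
  ((((hasDerivAt_pow 2 x).const_mul A).add ((hasDerivAt_id x).const_mul B)).add_const C).congr_deriv
    (by simp only [Nat.cast_ofNat, pow_one, Nat.add_one_sub_one, mul_one]; ring)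

theorem HasDerivAt.ofReal_comp_affine {f : ℝ → ℝ} {f' : ℝ} {B C x : ℝ}
    (hf : HasDerivAt f f' (B * x + C)) :
    HasDerivAt (fun y => (f (B * y + C) : ℂ)) ((B : ℂ) * f') x :=
  (hf.comp x (((hasDerivAt_id x).const_mul B).add_const C)).ofReal_comp.congr_deriv
    (by push_cast; ring)

section TravelingWave

variable (e : ℂ) (α β γ G : ℝ → ℝ)

noncomputable def travelingWave (x t : ℝ) : ℂ :=
  exp (e * ((α t * x ^ 2 + β t * x + γ t : ℝ) : ℂ)) * (G (β t * x + 2 * γ t) : ℂ)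

variable {e G}

theorem norm_travelingWave (he : e.re = 0) (x t : ℝ) :
    ‖travelingWave e α β γ G x t‖ = |G (β t * x + 2 * γ t)| := by
  rw [travelingWave, norm_mul, norm_exp, re_mul_ofReal, he, zero_mul, Real.exp_zero, one_mul,
    norm_real, Real.norm_eq_abs]

theorem pderivX_travelingWave (hG : Differentiable ℝ G) (t : ℝ) :
    (fun x => pderivX (travelingWave e α β γ G) x t) = fun x =>
      exp (e * ((α t * x ^ 2 + β t * x + γ t : ℝ) : ℂ)) *
        (e * ((2 * α t * x + β t : ℝ) : ℂ) * (G (β t * x + 2 * γ t) : ℂ)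
          + (β t : ℂ) * ((deriv G (β t * x + 2 * γ t) : ℝ) : ℂ)) := by
  funext x
  exact ((hasDerivAt_quadratic _ _ _ x).cexp_mul_ofReal_mul
    (hG _).hasDerivAt.ofReal_comp_affine).deriv

theorem pderivXX_travelingWave (hG : Differentiable ℝ G) (x t : ℝ)
    (hG' : DifferentiableAt ℝ (deriv G) (β t * x + 2 * γ t)) :
    pderivXX (travelingWave e α β γ G) x t =
      exp (e * ((α t * x ^ 2 + β t * x + γ t : ℝ) : ℂ)) *
        ((e ^ 2 * ((2 * α t * x + β t : ℝ) : ℂ) ^ 2 + 2 * e * (α t : ℂ)) * (G (β t * x + 2 * γ t) : ℂ)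
          + 2 * e * ((2 * α t * x + β t : ℝ) : ℂ) * (β t : ℂ)
            * ((deriv G (β t * x + 2 * γ t) : ℝ) : ℂ)
          + (β t : ℂ) ^ 2 * ((deriv (deriv G) (β t * x + 2 * γ t) : ℝ) : ℂ)) := by
  have hslope : HasDerivAt (fun y => e * ((2 * α t * y + β t : ℝ) : ℂ)) (e * (2 * α t : ℝ)) x :=
    (((hasDerivAt_id x).const_mul (2 * α t)).add_const (β t)).ofReal_comp.const_mul e
      |>.congr_deriv (by simp)
  have hamp := (hslope.mul (hG (β t * x + 2 * γ t)).hasDerivAt.ofReal_comp_affine).add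
    (hG'.hasDerivAt.ofReal_comp_affine.const_mul (β t : ℂ))
  rw [pderivXX_eq_deriv_pderivX, pderivX_travelingWave α β γ hG]
  refine ((hasDerivAt_quadratic _ _ _ x).cexp_mul_ofReal_mul hamp).deriv.trans ?_
  simp only [Pi.add_apply, Pi.mul_apply]
  push_cast; ring

theorem pderivT_travelingWave (x t : ℝ) (hα : DifferentiableAt ℝ α t)
    (hβ : DifferentiableAt ℝ β t) (hγ : DifferentiableAt ℝ γ t)
    (hG : DifferentiableAt ℝ G (β t * x + 2 * γ t)) :
    pderivT (travelingWave e α β γ G) x t =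
      exp (e * ((α t * x ^ 2 + β t * x + γ t : ℝ) : ℂ)) *
        (e * ((deriv α t * x ^ 2 + deriv β t * x + deriv γ t : ℝ) : ℂ) * (G (β t * x + 2 * γ t) : ℂ)
          + ((deriv β t * x + 2 * deriv γ t : ℝ) : ℂ) * ((deriv G (β t * x + 2 * γ t) : ℝ) : ℂ)) := by
  have hθ : HasDerivAt (fun s => α s * x ^ 2 + β s * x + γ s)
      (deriv α t * x ^ 2 + deriv β t * x + deriv γ t) t :=
    ((hα.hasDerivAt.mul_const _).add (hβ.hasDerivAt.mul_const x)).add hγ.hasDerivAt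
  have hξ : HasDerivAt (fun s => β s * x + 2 * γ s) (deriv β t * x + 2 * deriv γ t) t :=
    (hβ.hasDerivAt.mul_const x).add (hγ.hasDerivAt.const_mul 2)
  refine (hθ.cexp_mul_ofReal_mul (hG.hasDerivAt.comp t hξ).ofReal_comp).deriv.trans ?_
  simp only [Function.comp_apply]
  push_cast; ring

theorem travelingWave_equation (he : e ^ 2 = -1) (a b c d g h : ℝ → ℝ) (g0 h0 x t : ℝ)
    (hα : DifferentiableAt ℝ α t) (hβ : DifferentiableAt ℝ β t) (hγ : DifferentiableAt ℝ γ t)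
    (hG : Differentiable ℝ G) (hG' : DifferentiableAt ℝ (deriv G) (β t * x + 2 * γ t))
    (hRic1 : deriv α t + b t + 2 * c t * α t + 4 * a t * (α t) ^ 2 = 0)
    (hRic2 : deriv β t + (c t + 4 * a t * α t) * β t = 0)
    (hRic3 : deriv γ t + a t * (β t) ^ 2 = 0)
    (hd : d t = -2 * a t * α t) (hg : g t = g0 * a t * (β t) ^ 2)
    (hh : h t = h0 * a t * (β t) ^ 2)
    (hODE : deriv (deriv G) (β t * x + 2 * γ t) =
      g0 * G (β t * x + 2 * γ t) + 2 * h0 * G (β t * x + 2 * γ t) ^ 3) :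
    e * pderivT (travelingWave e α β γ G) x t =
      -(a t : ℂ) * pderivXX (travelingWave e α β γ G) x t
        + (b t : ℂ) * (x : ℂ) ^ 2 * travelingWave e α β γ G x t
        - e * (c t : ℂ) * (x : ℂ) * pderivX (travelingWave e α β γ G) x t
        - e * (d t : ℂ) * travelingWave e α β γ G x t + (g t : ℂ) * travelingWave e α β γ G x t
        + (h t : ℂ) * (2 * (G (β t * x + 2 * γ t) : ℂ) ^ 2) * travelingWave e α β γ G x t := by
  rw [pderivT_travelingWave α β γ x t hα hβ hγ (hG _), pderivXX_travelingWave α β γ hG x t hG',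
    congrFun (pderivX_travelingWave α β γ hG t) x, travelingWave, hODE, hd, hg, hh]
  have r1 := congrArg ((↑) : ℝ → ℂ) hRic1
  have r2 := congrArg ((↑) : ℝ → ℂ) hRic2
  have r3 := congrArg ((↑) : ℝ → ℂ) hRic3
  linear_combination (norm := (push_cast; ring1))
    exp (e * ((α t * x ^ 2 + β t * x + γ t : ℝ) : ℂ)) *
      ((G (β t * x + 2 * γ t) : ℂ) * (e ^ 2 * ((x : ℂ) ^ 2 * r1 + x * r2 + r3) - b t * x ^ 2 * he)
        + e * ((deriv G (β t * x + 2 * γ t) : ℝ) : ℂ) * (x * r2 + 2 * r3))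

end TravelingWave

theorem cnls_traveling_wave_reduction_general
    (a b c d g h : ℝ → ℝ) (g0 h0 : ℝ)
    (α β γ : ℝ → ℝ)
    (hαdiff : Differentiable ℝ α) (hβdiff : Differentiable ℝ β)
    (hγdiff : Differentiable ℝ γ)
    (hRic1 : ∀ t, deriv α t + b t + 2 * c t * α t + 4 * a t * (α t) ^ 2 = 0)
    (hRic2 : ∀ t, deriv β t + (c t + 4 * a t * α t) * β t = 0)
    (hRic3 : ∀ t, deriv γ t + a t * (β t) ^ 2 = 0)
    (hd : ∀ t, d t = -2 * a t * α t)
    (hg : ∀ t, g t = g0 * a t * (β t) ^ 2)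
    (hh : ∀ t, h t = h0 * a t * (β t) ^ 2)
    (G : ℝ → ℝ)
    (hGdiff : Differentiable ℝ G) (hGdiff2 : Differentiable ℝ (deriv G))
    (hG : ∀ ξ, deriv (deriv G) ξ = g0 * G ξ + 2 * h0 * (G ξ) ^ 3)
    (θ : ℝ → ℝ → ℝ) (hθ : ∀ x t, θ x t = α t * x ^ 2 + β t * x + γ t)
    (ξ : ℝ → ℝ → ℝ) (hξ : ∀ x t, ξ x t = β t * x + 2 * γ t) :
    CNLS a b c d g h
      (fun x t => Complex.exp (Complex.I * (θ x t : ℂ)) * ((G (ξ x t) : ℝ) : ℂ))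
      (fun x t => Complex.exp (-(Complex.I * (θ x t : ℂ))) * ((G (ξ x t) : ℝ) : ℂ)) := by
  obtain rfl : θ = fun x t => α t * x ^ 2 + β t * x + γ t := funext fun x => funext (hθ x)
  obtain rfl : ξ = fun x t => β t * x + 2 * γ t := funext fun x => funext (hξ x)
  simp_rw [← neg_mul]
  change CNLS a b c d g h (travelingWave I α β γ G) (travelingWave (-I) α β γ G)
  intro x t
  have hN : ((‖travelingWave I α β γ G x t‖ ^ 2 + ‖travelingWave (-I) α β γ G x t‖ ^ 2 : ℝ) : ℂ)
      = 2 * (G (β t * x + 2 * γ t) : ℂ) ^ 2 := by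
    rw [norm_travelingWave α β γ I_re, norm_travelingWave α β γ (by simp)]
    push_cast [sq_abs]; ring
  have key {e : ℂ} (he : e ^ 2 = -1) := travelingWave_equation α β γ he a b c d g h g0 h0 x t
    (hαdiff t) (hβdiff t) (hγdiff t) hGdiff (hGdiff2 _) (hRic1 t) (hRic2 t) (hRic3 t) (hd t) (hg t)
    (hh t) (hG _)
  rw [hN]
  constructor
  · linear_combination key I_sq
  · linear_combination -key (e := -I) (by rw [neg_sq, I_sq])

/-- Traveling-wave reduction of Section 2 of the paper: the ansatz
`ψ = e^{iθ} G(ξ)`, `φ = e^{-iθ} G(ξ)` with `θ = α x² + β x + γ`, `ξ = β x + 2γ`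
solves the variable-coefficient coupled NLS system whenever `G'' = g0 G + 2 h0 G³`
and the Riccati system holds. -/
theorem cnls_traveling_wave_reduction
    (a b c d g h : ℝ → ℝ) (g0 h0 : ℝ) (hg0 : g0 ≠ 0) (hh0 : h0 ≠ 0)
    (α β γ : ℝ → ℝ)
    (hαdiff : Differentiable ℝ α) (hβdiff : Differentiable ℝ β)
    (hγdiff : Differentiable ℝ γ)
    (hRic1 : ∀ t, deriv α t + b t + 2 * c t * α t + 4 * a t * (α t) ^ 2 = 0)
    (hRic2 : ∀ t, deriv β t + (c t + 4 * a t * α t) * β t = 0)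
    (hRic3 : ∀ t, deriv γ t + a t * (β t) ^ 2 = 0)
    (hd : ∀ t, d t = -2 * a t * α t)
    (hg : ∀ t, g t = g0 * a t * (β t) ^ 2)
    (hh : ∀ t, h t = h0 * a t * (β t) ^ 2)
    (G : ℝ → ℝ)
    (hGdiff : Differentiable ℝ G) (hGdiff2 : Differentiable ℝ (deriv G))
    (hG : ∀ ξ, deriv (deriv G) ξ = g0 * G ξ + 2 * h0 * (G ξ) ^ 3)
    (θ : ℝ → ℝ → ℝ) (hθ : ∀ x t, θ x t = α t * x ^ 2 + β t * x + γ t)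
    (ξ : ℝ → ℝ → ℝ) (hξ : ∀ x t, ξ x t = β t * x + 2 * γ t) :
    CNLS a b c d g h
      (fun x t => Complex.exp (Complex.I * (θ x t : ℂ)) * ((G (ξ x t) : ℝ) : ℂ))
      (fun x t => Complex.exp (-(Complex.I * (θ x t : ℂ))) * ((G (ξ x t) : ℝ) : ℂ)) :=
  cnls_traveling_wave_reduction_general a b c d g h g0 h0 α β γ hαdiff hβdiff hγdiff hRic1 hRic2
    hRic3 hd hg hh G hGdiff hGdiff2 hG θ hθ ξ hξ
end

section
/- Let a, b, c : ℝ → ℝ be given coefficient functions, let g0 < 0 and h0 > 0 be real constants, ξ0 ∈ ℝ, and let α, β, γ : ℝ → ℝ be differentiable functions satisfying α'(t) + b(t) + 2c(t)α(t) + 4a(t)α(t)² = 0, β'(t) + (c(t) + 4a(t)α(t))β(t) = 0, γ'(t) + a(t)β(t)² = 0. Suppose d(t) = -2a(t)α(t), g(t) = g0·a(t)·β(t)², h(t) = h0·a(t)·β(t)². Define θ(x,t) = α(t)x² + β(t)x + γ(t). Then ψ(x,t) = √(-g0/(2h0))·tanh(√(-g0/2)·(β(t)x + 2γ(t) - ξ0))·exp(i·θ(x,t))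 and φ(x,t) = √(-g0/(2h0))·tanh(√(-g0/2)·(β(t)x + 2γ(t) - ξ0))·exp(-i·θ(x,t)) satisfy the coupled NLS system with variable coefficients: i ψ_t = -a(t) ψ_xx + b(t)x²ψ - i c(t) x ψ_x - i d(t) ψ + g(t) ψ + h(t)(|ψ|²+|φ|²)ψ and i φ_t = a(t) φ_xx - b(t)x²φ - i c(t) x φ_x - i d(t) φ - g(t) φ - h(t)(|ψ|²+|φ|²)φ. -/
/-!
Insert the similarity ansatz ψ = U(ξ) e^{iθ}, ξ = β x + 2γ - ξ₀, θ = α x² + β x + γ. The three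
Riccati-type equations for α, β, γ cancel every x-dependent term, and the first equation reduces
to the stationary equation U'' = g₀ U + 2 h₀ U³, which the kink U = A tanh (K s) solves exactly when
2K² = -g₀ and h₀ A² = K². Since φ = ψ̄ and |φ| = |ψ|, the second equation is the complex conjugate
of the first.
-/

open Complex (I)
open scoped ComplexConjugate

theorem Real.hasDerivAt_tanh (y : ℝ) : HasDerivAt Real.tanh (1 - Real.tanh y ^ 2) y := by
  have hcosh := (Real.cosh_pos y).ne'
  have h := (Real.hasDerivAt_sinh y).div (Real.hasDerivAt_cosh y) hcosh
  rw [show Real.sinh / Real.cosh = Real.tanh from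
    funext fun z => (Real.tanh_eq_sinh_div_cosh z).symm] at h
  refine h.congr_deriv ?_
  rw [Real.tanh_eq_sinh_div_cosh]
  field_simp

noncomputable def kink (A K s : ℝ) : ℝ := A * Real.tanh (K * s)

theorem hasDerivAt_kink (A K s : ℝ) :
    HasDerivAt (kink A K) (A * K * (1 - Real.tanh (K * s) ^ 2)) s :=
  (((Real.hasDerivAt_tanh (K * s)).comp s ((hasDerivAt_id s).const_mul K)).const_mul A).congr_deriv
    (by ring)

theorem hasDerivAt_kink_deriv {A K g0 h0 : ℝ} (hK : 2 * K ^ 2 = -g0) (hA : h0 * A ^ 2 = K ^ 2)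
    (s : ℝ) :
    HasDerivAt (fun s => A * K * (1 - Real.tanh (K * s) ^ 2))
      (g0 * kink A K s + 2 * h0 * kink A K s ^ 3) s := by
  refine ((((Real.hasDerivAt_tanh (K * s)).comp s
    ((hasDerivAt_id s).const_mul K)).pow 2).const_sub 1).const_mul (A * K) |>.congr_deriv ?_
  simp only [kink, Function.comp_apply]
  linear_combination -A * Real.tanh (K * s) * hK - 2 * A * Real.tanh (K * s) ^ 3 * hA

theorem HasDerivAt.mul_exp_I {w : ℝ → ℂ} {v : ℝ → ℝ} {w' : ℂ} {v' y : ℝ}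
    (hw : HasDerivAt w w' y) (hv : HasDerivAt v v' y) :
    HasDerivAt (fun y => w y * Complex.exp (I * v y))
      ((w' + I * (v' : ℂ) * w y) * Complex.exp (I * v y)) y :=
  (hw.mul (hv.ofReal_comp.const_mul I).cexp).congr_deriv (by ring)

theorem iteratedDeriv_two_ofReal_mul_exp_I {w w' v v' : ℝ → ℝ} {w'' v'' y : ℝ}
    (hw : ∀ y, HasDerivAt w (w' y) y) (hw' : HasDerivAt w' w'' y)
    (hv : ∀ y, HasDerivAt v (v' y) y) (hv' : HasDerivAt v' v'' y) :
    iteratedDeriv 2 (fun y => (w y : ℂ) * Complex.exp (I * v y)) y =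
      ((w'' - w y * v' y ^ 2 : ℝ) + I * (2 * w' y * v' y + w y * v'' : ℝ))
        * Complex.exp (I * v y) := by
  have hderiv : deriv (fun y => (w y : ℂ) * Complex.exp (I * v y)) =
      fun y => ((w' y : ℂ) + I * (v' y : ℂ) * w y) * Complex.exp (I * v y) :=
    funext fun y => (HasDerivAt.mul_exp_I (hw y).ofReal_comp (hv y)).deriv
  have hamp : HasDerivAt (fun y => (w' y : ℂ) + I * (v' y : ℂ) * w y)
      (w'' + I * (v'' * w y + v' y * w' y : ℝ)) y := by
    refine (hw'.ofReal_comp.fun_add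
      ((hv'.ofReal_comp.const_mul I).fun_mul (hw y).ofReal_comp)).congr_deriv ?_
    push_cast
    ring
  rw [iteratedDeriv_succ, iteratedDeriv_one, hderiv, (hamp.mul_exp_I (hv y)).deriv]
  push_cast
  linear_combination (w y * v' y ^ 2 : ℂ) * Complex.exp (I * v y) * Complex.I_sq

theorem pderivT_conj (f : ℝ → ℝ → ℂ) (x t : ℝ) :
    pderivT (fun x t => conj (f x t)) x t = conj (pderivT f x t) :=
  deriv.star

theorem pderivX_conj (f : ℝ → ℝ → ℂ) (x t : ℝ) :
    pderivX (fun x t => conj (f x t)) x t = conj (pderivX f x t) :=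
  deriv.star

theorem pderivXX_conj (f : ℝ → ℝ → ℂ) (x t : ℝ) :
    pderivXX (fun x t => conj (f x t)) x t = conj (pderivXX f x t) := by
  simp only [pderivXX, iteratedDeriv_succ, iteratedDeriv_zero, ← Complex.star_def, deriv.star']

theorem CNLS.of_conj {a b c d g h : ℝ → ℝ} {ψ : ℝ → ℝ → ℂ}
    (hψ : ∀ x t, I * pderivT ψ x t =
      -(a t : ℂ) * pderivXX ψ x t + (b t : ℂ) * (x : ℂ) ^ 2 * ψ x t
        - I * (c t : ℂ) * (x : ℂ) * pderivX ψ x t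
        - I * (d t : ℂ) * ψ x t + (g t : ℂ) * ψ x t
        + (h t : ℂ) * ((‖ψ x t‖ ^ 2 + ‖conj (ψ x t)‖ ^ 2 : ℝ) : ℂ) * ψ x t) :
    CNLS a b c d g h ψ (fun x t => conj (ψ x t)) := by
  intro x t
  refine ⟨hψ x t, ?_⟩
  have hconj := congrArg conj (hψ x t)
  simp only [map_add, map_sub, map_mul, map_neg, map_pow, Complex.conj_I,
    Complex.conj_ofReal] at hconj
  rw [pderivT_conj, pderivX_conj, pderivXX_conj]
  linear_combination -hconj

theorem norm_ofReal_mul_exp_I (r s : ℝ) : ‖(r : ℂ) * Complex.exp (I * s)‖ = |r| := by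
  rw [norm_mul, Complex.norm_real, Complex.norm_exp_I_mul_ofReal, mul_one, Real.norm_eq_abs]

theorem conj_ofReal_mul_exp_I (r s : ℝ) :
    conj ((r : ℂ) * Complex.exp (I * s)) = r * Complex.exp (-(I * s)) := by
  rw [map_mul, Complex.conj_ofReal, ← Complex.exp_conj, map_mul, Complex.conj_I,
    Complex.conj_ofReal, neg_mul]

theorem CNLS.of_similarity_ansatz {a b c d g h α β γ U U' : ℝ → ℝ} {g0 h0 : ℝ} (ξ0 : ℝ)
    (hαdiff : Differentiable ℝ α) (hβdiff : Differentiable ℝ β)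
    (hγdiff : Differentiable ℝ γ)
    (hRic1 : ∀ t, deriv α t + b t + 2 * c t * α t + 4 * a t * (α t) ^ 2 = 0)
    (hRic2 : ∀ t, deriv β t + (c t + 4 * a t * α t) * β t = 0)
    (hRic3 : ∀ t, deriv γ t + a t * (β t) ^ 2 = 0)
    (hd : ∀ t, d t = -2 * a t * α t)
    (hg : ∀ t, g t = g0 * a t * (β t) ^ 2)
    (hh : ∀ t, h t = h0 * a t * (β t) ^ 2)
    (hU : ∀ s, HasDerivAt U (U' s) s)
    (hU' : ∀ s, HasDerivAt U' (g0 * U s + 2 * h0 * U s ^ 3) s) :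
    CNLS a b c d g h
      (fun x t => (U (β t * x + 2 * γ t - ξ0) : ℂ)
        * Complex.exp (I * ((α t * x ^ 2 + β t * x + γ t : ℝ) : ℂ)))
      (fun x t => conj ((U (β t * x + 2 * γ t - ξ0) : ℂ)
        * Complex.exp (I * ((α t * x ^ 2 + β t * x + γ t : ℝ) : ℂ)))) := by
  refine CNLS.of_conj fun x t => ?_
  have hξx : ∀ y, HasDerivAt (fun y => β t * y + 2 * γ t - ξ0) (β t) y := fun y =>
    (((hasDerivAt_id y).const_mul (β t)).add_const _).sub_const _ |>.congr_deriv (mul_one _)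
  have hθx : ∀ y, HasDerivAt (fun y => α t * y ^ 2 + β t * y + γ t) (2 * α t * y + β t) y :=
    fun y => ((((hasDerivAt_pow 2 y).const_mul (α t)).add
      ((hasDerivAt_id y).const_mul (β t))).add_const _).congr_deriv (by ring)
  have hθxx : HasDerivAt (fun y => 2 * α t * y + β t) (2 * α t) x :=
    (((hasDerivAt_id x).const_mul (2 * α t)).add_const _).congr_deriv (mul_one _)
  have hwx : ∀ y, HasDerivAt (fun y => U (β t * y + 2 * γ t - ξ0))
      (U' (β t * y + 2 * γ t - ξ0) * β t) y := fun y => (hU _).comp y (hξx y)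
  have hwxx : HasDerivAt (fun y => U' (β t * y + 2 * γ t - ξ0) * β t)
      ((g0 * U (β t * x + 2 * γ t - ξ0) + 2 * h0 * U (β t * x + 2 * γ t - ξ0) ^ 3)
        * β t * β t) x := ((hU' _).comp x (hξx x)).mul_const _
  have hξt : HasDerivAt (fun s => β s * x + 2 * γ s - ξ0)
      (deriv β t * x + 2 * deriv γ t) t :=
    (((hβdiff t).hasDerivAt.mul_const x).add ((hγdiff t).hasDerivAt.const_mul 2)).sub_const _
  have hθt : HasDerivAt (fun s => α s * x ^ 2 + β s * x + γ s)
      (deriv α t * x ^ 2 + deriv β t * x + deriv γ t) t :=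
    (((hαdiff t).hasDerivAt.mul_const _).add ((hβdiff t).hasDerivAt.mul_const x)).add
      (hγdiff t).hasDerivAt
  have hwt : HasDerivAt (fun s => U (β s * x + 2 * γ s - ξ0))
      (U' (β t * x + 2 * γ t - ξ0) * (deriv β t * x + 2 * deriv γ t)) t := (hU _).comp t hξt
  have hψt := HasDerivAt.mul_exp_I hwt.ofReal_comp hθt
  have hψx := HasDerivAt.mul_exp_I (hwx x).ofReal_comp (hθx x)
  have hψxx := iteratedDeriv_two_ofReal_mul_exp_I hwx hwxx hθx hθxx
  simp only [pderivT, pderivX, pderivXX, Complex.norm_conj, norm_ofReal_mul_exp_I, sq_abs]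
  rw [hψt.deriv, hψx.deriv, hψxx, hd, hg, hh]
  set u := U (β t * x + 2 * γ t - ξ0)
  set u' := U' (β t * x + 2 * γ t - ξ0)
  set E := Complex.exp (I * ((α t * x ^ 2 + β t * x + γ t : ℝ) : ℂ))
  have hα' := congrArg Complex.ofReal (hRic1 t)
  have hβ' := congrArg Complex.ofReal (hRic2 t)
  have hγ' := congrArg Complex.ofReal (hRic3 t)
  push_cast at hα' hβ' hγ' ⊢
  -- After `I * I = -1`, the real part is `-u (x² hα' + x hβ' + hγ')` and the imaginary part
  -- `u' (x hβ' + 2 hγ')`.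
  linear_combination
    (deriv α t * x ^ 2 + deriv β t * x + deriv γ t + c t * x * (2 * α t * x + β t) : ℂ)
      * u * E * Complex.I_sq
    - u * E * (x ^ 2 * hα' + x * hβ' + hγ') + I * u' * E * (x * hβ' + 2 * hγ')

/-- The kink-shaped (dark soliton) solutions of the paper solve the
variable-coefficient coupled NLS system. -/
theorem dark_soliton_solutions
    (a b c d g h : ℝ → ℝ) (g0 h0 ξ0 : ℝ) (hg0 : g0 < 0) (hh0 : 0 < h0)
    (α β γ : ℝ → ℝ)
    (hαdiff : Differentiable ℝ α) (hβdiff : Differentiable ℝ β)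
    (hγdiff : Differentiable ℝ γ)
    (hRic1 : ∀ t, deriv α t + b t + 2 * c t * α t + 4 * a t * (α t) ^ 2 = 0)
    (hRic2 : ∀ t, deriv β t + (c t + 4 * a t * α t) * β t = 0)
    (hRic3 : ∀ t, deriv γ t + a t * (β t) ^ 2 = 0)
    (hd : ∀ t, d t = -2 * a t * α t)
    (hg : ∀ t, g t = g0 * a t * (β t) ^ 2)
    (hh : ∀ t, h t = h0 * a t * (β t) ^ 2)
    (θ : ℝ → ℝ → ℝ) (hθ : ∀ x t, θ x t = α t * x ^ 2 + β t * x + γ t) :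
    CNLS a b c d g h
      (fun x t => ((Real.sqrt (-g0 / (2 * h0))
          * Real.tanh (Real.sqrt (-g0 / 2) * (β t * x + 2 * γ t - ξ0)) : ℝ) : ℂ)
        * Complex.exp (Complex.I * (θ x t : ℂ)))
      (fun x t => ((Real.sqrt (-g0 / (2 * h0))
          * Real.tanh (Real.sqrt (-g0 / 2) * (β t * x + 2 * γ t - ξ0)) : ℝ) : ℂ)
        * Complex.exp (-(Complex.I * (θ x t : ℂ)))) := by
  have hK : 2 * √(-g0 / 2) ^ 2 = -g0 := by
    rw [Real.sq_sqrt (by linarith)]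
    ring
  have hA : h0 * √(-g0 / (2 * h0)) ^ 2 = √(-g0 / 2) ^ 2 := by
    rw [Real.sq_sqrt (div_nonneg (by linarith) (by linarith)), Real.sq_sqrt (by linarith)]
    field_simp
  simp only [hθ, ← conj_ofReal_mul_exp_I]
  exact CNLS.of_similarity_ansatz (U := kink _ _) ξ0 hαdiff hβdiff hγdiff
    hRic1 hRic2 hRic3 hd hg hh (hasDerivAt_kink _ _) (hasDerivAt_kink_deriv hK hA)
end

section
/- Let a, b, c, d, g, h : ℝ → ℝ be given coefficient functions and let ψ, φ : ℝ × ℝ → ℂ be continuously differentiable in t and twice continuously differentiable in x, satisfying the coupled NLS system with variable coefficients: i ψ_t = -a(t) ψ_xx + b(t)x²ψ - i c(t) x ψ_x - i d(t) ψ + g(t) ψ + h(t)(|ψ|²+|φ|²)ψ and i φ_t = a(t) φ_xx - b(t)x²φ - i c(t) x φ_x - i d(t) φ - g(t) φ - h(t)(|ψ|²+|φ|²)φ. Then for all (x,t): ∂_t (|ψ(x,t)|² + |φ(x,t)|²) = ∂_x [ 2a(t)·Im( conj(φ(x,t))·φ_x(x,t) - conj(ψ(x,t))·ψ_x(x,t)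 ) ] - c(t)·x·∂_x (|ψ(x,t)|² + |φ(x,t)|²) - 2d(t)·(|ψ(x,t)|² + |φ(x,t)|²). -/
open ComplexConjugate

theorem HasDerivAt.norm_sq_complex {f : ℝ → ℂ} {f' : ℂ} {x : ℝ} (hf : HasDerivAt f f' x) :
    HasDerivAt (fun y => ‖f y‖ ^ 2) (2 * (conj (f x) * f').re) x := by
  simpa [Complex.inner, mul_comm] using hf.norm_sq

theorem ContDiff.hasDerivAt_deriv {𝕜 F : Type*} [NontriviallyNormedField 𝕜]
    [NormedAddCommGroup F] [NormedSpace 𝕜 F] {u : 𝕜 → F} (hu : ContDiff 𝕜 2 u) (x : 𝕜) :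
    HasDerivAt (deriv u) (iteratedDeriv 2 u x) x := by
  have hu' := hu.differentiable_iteratedDeriv 1 (by norm_num)
  rw [iteratedDeriv_one] at hu'
  rw [iteratedDeriv_succ', iteratedDeriv_one]
  exact (hu' x).hasDerivAt

theorem hasDerivAt_im_conj_mul_deriv {u v : ℝ → ℂ} {v' : ℂ} {x : ℝ} (hu : HasDerivAt u (v x) x)
    (hv : HasDerivAt v v' x) :
    HasDerivAt (fun y => (conj (u y) * v y).im) (conj (u x) * v').im x := by
  have h : HasDerivAt (fun y => (conj (u y) * v y).im) (conj (v x) * v x + conj (u x) * v').im x :=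
    Complex.imCLM.hasFDerivAt.comp_hasDerivAt x (hu.star.fun_mul hv)
  rwa [Complex.add_im, Complex.conj_mul', ← Complex.ofReal_pow, Complex.ofReal_im, zero_add] at h

theorem re_conj_mul_of_schrodinger {α V κ δ : ℝ} (u ut ux uxx : ℂ)
    (hu : Complex.I * ut = -α * uxx + V * u - Complex.I * κ * ux - Complex.I * δ * u) :
    (conj u * ut).re = -α * (conj u * uxx).im - κ * (conj u * ux).re - δ * ‖u‖ ^ 2 := by
  have hre := congrArg Complex.re hu
  have him := congrArg Complex.im hu
  simp only [Complex.mul_re, Complex.mul_im, Complex.add_re, Complex.add_im, Complex.sub_re,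
    Complex.sub_im, Complex.neg_re, Complex.neg_im, Complex.I_re, Complex.I_im,
    Complex.ofReal_re, Complex.ofReal_im] at hre him
  simp only [Complex.mul_re, Complex.mul_im, Complex.conj_re, Complex.conj_im, Complex.sq_norm,
    Complex.normSq_apply]
  linear_combination u.re * him - u.im * hre

section

variable {f : ℝ → ℝ → ℂ}

theorem hasDerivAt_pderivT {x : ℝ} (hf : ContDiff ℝ 1 (fun t => f x t)) (t : ℝ) :
    HasDerivAt (fun t' => f x t') (pderivT f x t) t :=
  (hf.differentiable one_ne_zero t).hasDerivAt

theorem hasDerivAt_pderivX {t : ℝ} (hf : ContDiff ℝ 2 (fun x => f x t)) (x : ℝ) :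
    HasDerivAt (fun x' => f x' t) (pderivX f x t) x :=
  (hf.differentiable two_ne_zero x).hasDerivAt

theorem hasDerivAt_im_conj_mul_pderivX {t : ℝ} (hf : ContDiff ℝ 2 (fun x => f x t)) (x : ℝ) :
    HasDerivAt (fun x' => (conj (f x' t) * pderivX f x' t).im) (conj (f x t) * pderivXX f x t).im x :=
  hasDerivAt_im_conj_mul_deriv (hasDerivAt_pderivX hf x) (hf.hasDerivAt_deriv x)

end

/-- Pointwise local mass-balance law for the variable-coefficient coupled NLS
system: the density `|ψ|² + |φ|²` satisfies
`∂ₜ(|ψ|²+|φ|²) = ∂ₓ[2a Im(conj φ · φₓ - conj ψ · ψₓ)] - c x ∂ₓ(|ψ|²+|φ|²) - 2d (|ψ|²+|φ|²)`. -/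
theorem cnls_local_mass_balance
    (a b c d g h : ℝ → ℝ) (ψ φ : ℝ → ℝ → ℂ)
    (hψt : ∀ x, ContDiff ℝ 1 (fun t => ψ x t))
    (hψx : ∀ t, ContDiff ℝ 2 (fun x => ψ x t))
    (hφt : ∀ x, ContDiff ℝ 1 (fun t => φ x t))
    (hφx : ∀ t, ContDiff ℝ 2 (fun x => φ x t))
    (hsys : CNLS a b c d g h ψ φ) :
    ∀ x t : ℝ,
      deriv (fun t' => ‖ψ x t'‖ ^ 2 + ‖φ x t'‖ ^ 2) t
        = deriv (fun x' => 2 * a t *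
            ((starRingEnd ℂ) (φ x' t) * pderivX φ x' t
              - (starRingEnd ℂ) (ψ x' t) * pderivX ψ x' t).im) x
          - c t * x * deriv (fun x' => ‖ψ x' t‖ ^ 2 + ‖φ x' t‖ ^ 2) x
          - 2 * d t * (‖ψ x t‖ ^ 2 + ‖φ x t‖ ^ 2) := by
  intro x t
  obtain ⟨hψ, hφ⟩ := hsys x t
  set ρ := ‖ψ x t‖ ^ 2 + ‖φ x t‖ ^ 2
  have hψ_bal := re_conj_mul_of_schrodinger (α := a t) (V := b t * x ^ 2 + g t + h t * ρ)
    (κ := c t * x) (δ := d t) (ψ x t) (pderivT ψ x t) (pderivX ψ x t) (pderivXX ψ x t)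
    (by rw [hψ]; push_cast; ring)
  have hφ_bal := re_conj_mul_of_schrodinger (α := -a t) (V := -(b t * x ^ 2 + g t + h t * ρ))
    (κ := c t * x) (δ := d t) (φ x t) (pderivT φ x t) (pderivX φ x t) (pderivXX φ x t)
    (by rw [hφ]; push_cast; ring)
  have hT := (hasDerivAt_pderivT (hψt x) t).norm_sq_complex.fun_add
    (hasDerivAt_pderivT (hφt x) t).norm_sq_complex
  have hX := (hasDerivAt_pderivX (hψx t) x).norm_sq_complex.fun_add
    (hasDerivAt_pderivX (hφx t) x).norm_sq_complex
  have hF := ((hasDerivAt_im_conj_mul_pderivX (hφx t) x).fun_sub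
    (hasDerivAt_im_conj_mul_pderivX (hψx t) x)).const_mul (2 * a t)
  simp only [Complex.sub_im]
  rw [hT.deriv, hX.deriv, hF.deriv]
  linear_combination 2 * hψ_bal + 2 * hφ_bal
end

section
/- Let a, h, w, k be real numbers and let P ≥ 0, Q ≥ 0 be real numbers (representing |ψ0|² and |φ0|²). Let M be the 4×4 real matrix with rows: row 1 = (w - a k² - h P, -h P, -h Q, -h Q); row 2 = (-h P, -w - a k² - h P, -h Q, -h Q); row 3 = (h P, h P, w + a k² + h Q, h Q); row 4 = (h P, h P, h Q, -w + a k² + h Q). Then det M = 0 if and only if w² = a²k⁴ or w² = a²k⁴ + 2·a·h·k²·(P + Q). -/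
/-!
With `A = a k²`, `p = hP`, `q = hQ`, the matrix is `diag(w - A, -w - A, w + A, -w + A) + s rᵀ`
for `s = (-1, -1, 1, 1)` and `r = (p, p, q, q)`. By the matrix determinant lemma its determinant
is `det D · (1 + rᵀ D⁻¹ s) = (w² - A²)² - 2 A (p + q) (w² - A²)`, which factors into the two
branches of the dispersion relation. As a polynomial identity it holds over any commutative ring,
and is checked there by cofactor expansion.
-/

def dispersionMatrix {R : Type*} [Ring R] (w A p q : R) : Matrix (Fin 4) (Fin 4) R :=
  !![w - A - p, -p, -q, -q;
    -p, -w - A - p, -q, -q;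
    p, p, w + A + q, q;
    p, p, q, -w + A + q]

theorem det_dispersionMatrix {R : Type*} [CommRing R] (w A p q : R) :
    (dispersionMatrix w A p q).det = (w ^ 2 - A ^ 2) * (w ^ 2 - (A ^ 2 + 2 * A * (p + q))) := by
  rw [dispersionMatrix, Matrix.det_succ_row_zero]
  simp only [Nat.succ_eq_add_one, Nat.reduceAdd, Fin.isValue, Matrix.of_apply, Matrix.cons_val',
    Matrix.cons_val_fin_one, Matrix.cons_val_zero, Matrix.det_fin_three, Matrix.submatrix_apply,
    Fin.succ_zero_eq_one, Fin.succAbove, Fin.castSucc_zero, Matrix.cons_val_one,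
    Fin.succ_one_eq_two, Fin.castSucc_one, Matrix.cons_val, Fin.reduceSucc, Fin.reduceCastSucc,
    Fin.sum_univ_four, Fin.coe_ofNat_eq_mod, Nat.zero_mod, pow_zero, one_mul, lt_self_iff_false,
    ↓reduceIte, not_lt_zero, neg_mul, sub_neg_eq_add, Nat.one_mod, pow_one, mul_neg, neg_neg,
    zero_lt_one, Fin.lt_one_iff, Fin.reduceEq, Nat.reduceMod, even_two, Even.neg_pow, one_pow,
    Fin.reduceLT, neg_add_cancel_right, Nat.mod_succ]
  ring

theorem dispersion_relation_det_general
    (a h w k P Q : ℝ) :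
    (Matrix.det !![w - a * k ^ 2 - h * P, -(h * P), -(h * Q), -(h * Q);
        -(h * P), -w - a * k ^ 2 - h * P, -(h * Q), -(h * Q);
        h * P, h * P, w + a * k ^ 2 + h * Q, h * Q;
        h * P, h * P, h * Q, -w + a * k ^ 2 + h * Q] = 0)
      ↔ (w ^ 2 = a ^ 2 * k ^ 4 ∨ w ^ 2 = a ^ 2 * k ^ 4 + 2 * a * h * k ^ 2 * (P + Q)) := by
  change (dispersionMatrix w (a * k ^ 2) (h * P) (h * Q)).det = 0 ↔ _
  rw [det_dispersionMatrix, mul_eq_zero, sub_eq_zero, sub_eq_zero]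
  ring_nf

/-- Dispersion relation of the modulational-instability analysis: the
determinant of the linearization matrix vanishes iff
`w² = a²k⁴` or `w² = a²k⁴ + 2 a h k² (P + Q)`. -/
theorem dispersion_relation_det
    (a h w k P Q : ℝ) (hP : 0 ≤ P) (hQ : 0 ≤ Q) :
    (Matrix.det !![w - a * k ^ 2 - h * P, -(h * P), -(h * Q), -(h * Q);
        -(h * P), -w - a * k ^ 2 - h * P, -(h * Q), -(h * Q);
        h * P, h * P, w + a * k ^ 2 + h * Q, h * Q;
        h * P, h * P, h * Q, -w + a * k ^ 2 + h * Q] = 0)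
      ↔ (w ^ 2 = a ^ 2 * k ^ 4 ∨ w ^ 2 = a ^ 2 * k ^ 4 + 2 * a * h * k ^ 2 * (P + Q)) :=
  dispersion_relation_det_general a h w k P Q
end
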